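/- CTTC is not Pareto optimal even under strict utilities: in the 4-agent, 2-room instance where every agent values its current roommate at 7, the other two agents at 1 and 2, its current room at 3 and the other room at 5, no contractual trading arc exists in the initial assignment {(a1,a2,r1),(a3,a4,r2)}, yet the assignment {(a3,a4,r1),(a1,a2,r2)} gives every agent strictly higher utility. -/
import Mathlib


/-- A roommate assignment: each agent has a roommate (`mate`) and a room (`room`);
roommates share a room and each room hosts exactly one pair. -/
structure Assignment (A R : Type*) where
  mate : A → A
  room : A → R
  mate_ne_self : ∀ i, mate i ≠ i
  mate_invol : ∀ i, mate (mate i) = i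
  room_mate : ∀ i, room (mate i) = room i
  room_eq_iff : ∀ i j, room i = room j ↔ (j = i ∨ j = mate i)

variable {A R : Type*}

/-- Utility of agent `i` in assignment `μ`: happiness for the roommate plus value of the room. -/
def util (h : A → A → ℝ) (v : A → R → ℝ) (μ : Assignment A R) (i : A) : ℝ :=
  h i (μ.mate i) + v i (μ.room i)

/-- `(i,j)` is a 2-person-stable blocking pair: they live in different rooms and both would
strictly gain by swapping places. -/
def blocking2PS (h : A → A → ℝ) (v : A → R → ℝ) (μ : Assignment A R) (i j : A) : Prop :=
  μ.room i ≠ μ.room j ∧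
  h i (μ.mate j) + v i (μ.room j) > h i (μ.mate i) + v i (μ.room i) ∧
  h j (μ.mate i) + v j (μ.room i) > h j (μ.mate j) + v j (μ.room j)

/-- `(i,j)` is a 4-person-stable blocking pair: in addition, both displaced roommates
strictly prefer their new roommate. -/
def blocking4PS (h : A → A → ℝ) (v : A → R → ℝ) (μ : Assignment A R) (i j : A) : Prop :=
  blocking2PS h v μ i j ∧
  h (μ.mate i) j > h (μ.mate i) i ∧
  h (μ.mate j) i > h (μ.mate j) j

def is2PS (h : A → A → ℝ) (v : A → R → ℝ) (μ : Assignment A R) : Prop :=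
  ∀ i j, ¬ blocking2PS h v μ i j

def is4PS (h : A → A → ℝ) (v : A → R → ℝ) (μ : Assignment A R) : Prop :=
  ∀ i j, ¬ blocking4PS h v μ i j

/-- `μ'` Pareto dominates `μ`. -/
def ParetoDom (h : A → A → ℝ) (v : A → R → ℝ) (μ' μ : Assignment A R) : Prop :=
  (∀ i, util h v μ i ≤ util h v μ' i) ∧ ∃ i, util h v μ i < util h v μ' i

def ParetoOpt (h : A → A → ℝ) (v : A → R → ℝ) (μ : Assignment A R) : Prop :=
  ∀ μ', ¬ ParetoDom h v μ' μ

/-- `μ'` is the result of swapping agents `i` and `j` in `μ`. -/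
def IsSwap (μ μ' : Assignment A R) (i j : A) : Prop :=
  μ'.mate i = μ.mate j ∧ μ'.room i = μ.room j ∧
  μ'.mate j = μ.mate i ∧ μ'.room j = μ.room i ∧
  μ'.room (μ.mate i) = μ.room i ∧ μ'.room (μ.mate j) = μ.room j ∧
  ∀ k, k ≠ i → k ≠ j → k ≠ μ.mate i → k ≠ μ.mate j →
    μ'.mate k = μ.mate k ∧ μ'.room k = μ.room k

/-- Social welfare: the sum of all agents' utilities. -/
noncomputable def SW [Fintype A] (h : A → A → ℝ) (v : A → R → ℝ) (μ : Assignment A R) : ℝ :=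
  ∑ i, util h v μ i

/-- Utility agent `i` would get by swapping places with agent `s`. -/
def swapUtil (h : A → A → ℝ) (v : A → R → ℝ) (μ : Assignment A R) (i s : A) : ℝ :=
  h i (μ.mate s) + v i (μ.room s)

/-- Contractual arc of the CTTC trading graph. -/
def CTTCarc (h : A → A → ℝ) (v : A → R → ℝ) (μ : Assignment A R) (i j : A) : Prop :=
  j ≠ i ∧ j ≠ μ.mate i ∧
  swapUtil h v μ i j > util h v μ i ∧
  (∀ s, s ≠ i → s ≠ μ.mate i → swapUtil h v μ i s ≤ swapUtil h v μ i j) ∧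
  h (μ.mate j) i ≥ h (μ.mate j) j

/-- Happiness values (agents a1..a4 = 0..3). -/
def hEx12 : Fin 4 → Fin 4 → ℝ := ![![0,7,1,2], ![7,0,2,1], ![1,2,0,7], ![2,1,7,0]]

/-- Room values (rooms r1,r2 = 0,1). -/
def vEx12 : Fin 4 → Fin 2 → ℝ := ![![3,5], ![3,5], ![5,3], ![5,3]]

/-- Initial assignment {(a1,a2,r1),(a3,a4,r2)}. -/
def μ12 : Assignment (Fin 4) (Fin 2) :=
  ⟨![1,0,3,2], ![0,0,1,1], by decide, by decide, by decide, by decide⟩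

/-- Assignment {(a3,a4,r1),(a1,a2,r2)}. -/
def μ12' : Assignment (Fin 4) (Fin 2) :=
  ⟨![1,0,3,2], ![1,1,0,0], by decide, by decide, by decide, by decide⟩

/-- CTTC is not Pareto optimal even under strict utilities: in this instance
no contractual trading arc exists at the initial assignment, yet the alternative
assignment gives every agent strictly higher utility, so the initial assignment is not
Pareto optimal. -/
theorem cttc_not_paretoOpt :
    (∀ i j, ¬ CTTCarc hEx12 vEx12 μ12 i j) ∧
    (∀ i, util hEx12 vEx12 μ12 i < util hEx12 vEx12 μ12' i) ∧
    ¬ ParetoOpt hEx12 vEx12 μ12 := by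
  have hlt : ∀ i, util hEx12 vEx12 μ12 i < util hEx12 vEx12 μ12' i := by
    intro i
    fin_cases i <;> norm_num [util, hEx12, vEx12, μ12, μ12']
  refine ⟨?_, hlt, ?_⟩
  · rintro i j ⟨hj, hj2, hgt, -, -⟩
    fin_cases i <;> fin_cases j <;>
      simp_all [swapUtil, util, hEx12, vEx12, μ12, Matrix.vecHead, Matrix.vecTail] <;> norm_num at hgt
  · intro hPO
    exact hPO μ12' ⟨fun i => (hlt i).le, 0, hlt 0⟩
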